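/- arXiv:2512.11640 — 2 statements merged into one kernel-verified Lean document; each statement's English description precedes it below -/
import Mathlib

section
/- Let X be a complex Banach space and suppose φ ∈ ℳ(𝒜_u(B_X)) satisfies φ = w*-lim δ_{z_α} for some net {z_α}_α contained in the closed unit ball of X, and φ ∉ 𝒢𝒫(δ_0). Then there exists a net {z̃_α}_α contained in the unit sphere S_X such that φ = w*-lim δ_{z̃_α}. -/
open Metric Filter Set Topology ENNReal

noncomputable section

/-- Membership in the algebra `𝒜_u(B_X)` of holomorphic and uniformly continuous
functions on the open unit ball of `X`, each such function being identified with
its (unique) uniformly continuous extension to the closed unit ball. -/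
def MemAu (X : Type*) [NormedAddCommGroup X] [NormedSpace ℂ X] (f : X → ℂ) : Prop :=
  DifferentiableOn ℂ f (ball (0 : X) 1) ∧ UniformContinuousOn f (closedBall (0 : X) 1)

/-- The spectrum `ℳ(𝒜_u(B_X))`: nonzero multiplicative linear functionals on
`𝒜_u(B_X)` (such functionals automatically have norm at most one, which is the
content of the field `bound'`). -/
structure SpectrumAu (X : Type*) [NormedAddCommGroup X] [NormedSpace ℂ X] where
  toFun : ∀ f : X → ℂ, MemAu X f → ℂ
  ext' : ∀ f g hf hg, Set.EqOn f g (closedBall (0 : X) 1) → toFun f hf = toFun g hg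
  map_add' : ∀ f g hf hg hfg, toFun (f + g) hfg = toFun f hf + toFun g hg
  map_smul' : ∀ (c : ℂ) (f : X → ℂ) (hf) (hcf), toFun (c • f) hcf = c * toFun f hf
  map_mul' : ∀ f g hf hg hfg, toFun (f * g) hfg = toFun f hf * toFun g hg
  nonzero' : ∃ f hf, toFun f hf ≠ 0
  bound' : ∀ f hf C, (∀ x ∈ closedBall (0 : X) 1, ‖f x‖ ≤ C) → ‖toFun f hf‖ ≤ C

theorem memAu_one (X : Type*) [NormedAddCommGroup X] [NormedSpace ℂ X] :
    MemAu X (1 : X → ℂ) :=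
  ⟨fun _ _ => differentiableWithinAt_const 1,
    uniformContinuous_const.mono_left inf_le_left⟩

/-- The evaluation homomorphism at a point of the closed unit ball. -/
def evalHomCB {X : Type*} [NormedAddCommGroup X] [NormedSpace ℂ X]
    (x : X) (hx : ‖x‖ ≤ 1) : SpectrumAu X where
  toFun f _ := f x
  ext' := fun _ _ _ _ h => h (mem_closedBall_zero_iff.2 hx)
  map_add' := fun _ _ _ _ _ => rfl
  map_smul' := fun _ _ _ _ => rfl
  map_mul' := fun _ _ _ _ _ => rfl
  nonzero' := ⟨1, memAu_one X, one_ne_zero⟩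
  bound' := fun _ _ _ hC => hC x (mem_closedBall_zero_iff.2 hx)

/-- The evaluation homomorphism `δ_x`; junk value for `x` outside the closed ball. -/
def evalHom {X : Type*} [NormedAddCommGroup X] [NormedSpace ℂ X] (x : X) : SpectrumAu X :=
  if hx : ‖x‖ ≤ 1 then evalHomCB x hx else evalHomCB 0 (by simp)

/-- The Gleason distance `‖φ - ψ‖` in the dual of `𝒜_u(B_X)`. -/
def gleasonDist {X : Type*} [NormedAddCommGroup X] [NormedSpace ℂ X]
    (φ ψ : SpectrumAu X) : ℝ :=
  sSup {r : ℝ | ∃ (f : X → ℂ) (hf : MemAu X f),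
    (∀ x ∈ closedBall (0 : X) 1, ‖f x‖ ≤ 1) ∧ r = ‖φ.toFun f hf - ψ.toFun f hf‖}

/-- The Gleason part `𝒢𝒫(φ)`. -/
def gleasonPart {X : Type*} [NormedAddCommGroup X] [NormedSpace ℂ X]
    (φ : SpectrumAu X) : Set (SpectrumAu X) :=
  {ψ | gleasonDist φ ψ < 2}

/-- The pseudo-hyperbolic distance `ρ(φ, ψ)`. -/
def pseudoDist {X : Type*} [NormedAddCommGroup X] [NormedSpace ℂ X]
    (φ ψ : SpectrumAu X) : ℝ :=
  sSup {r : ℝ | ∃ (f : X → ℂ) (hf : MemAu X f),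
    (∀ x ∈ closedBall (0 : X) 1, ‖f x‖ ≤ 1) ∧ ψ.toFun f hf = 0 ∧ r = ‖φ.toFun f hf‖}

/-- Membership in the fiber `ℳ_z` over a point `z` of `X`. -/
def memFiber {X : Type*} [NormedAddCommGroup X] [NormedSpace ℂ X]
    (φ : SpectrumAu X) (z : X) : Prop :=
  ∀ (x' : X →L[ℂ] ℂ) (h : MemAu X ⇑x'), φ.toFun ⇑x' h = x' z

/-- The set of weak-star accumulation points of a family in the spectrum. -/
def wStarAccPts {X : Type*} [NormedAddCommGroup X] [NormedSpace ℂ X]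
    {ι : Type*} (l : Filter ι) (Φ : ι → SpectrumAu X) : Set (SpectrumAu X) :=
  {ψ | ∀ (F : Finset (X → ℂ)) (hF : ∀ f ∈ F, MemAu X f) (ε : ℝ), 0 < ε →
    ∃ᶠ i in l, ∀ f, ∀ hf : f ∈ F,
      ‖(Φ i).toFun f (hF f hf) - ψ.toFun f (hF f hf)‖ < ε}

/-- Weak-star convergence of a net in the spectrum. -/
def WStarTendsto {X : Type*} [NormedAddCommGroup X] [NormedSpace ℂ X]
    {ι : Type*} (l : Filter ι) (Φ : ι → SpectrumAu X) (ψ : SpectrumAu X) : Prop :=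
  ∀ (f : X → ℂ) (hf : MemAu X f),
    Tendsto (fun i => (Φ i).toFun f hf) l (𝓝 (ψ.toFun f hf))

/-- Membership in the weak-star closure of the set of evaluations at points of the
open unit ball. -/
def inWStarClosureOfEvals {X : Type*} [NormedAddCommGroup X] [NormedSpace ℂ X]
    (ψ : SpectrumAu X) : Prop :=
  ∀ (F : Finset (X → ℂ)) (hF : ∀ f ∈ F, MemAu X f) (ε : ℝ), 0 < ε →
    ∃ x : X, ‖x‖ < 1 ∧ ∀ f, ∀ hf : f ∈ F,
      ‖(evalHom x).toFun f (hF f hf) - ψ.toFun f (hF f hf)‖ < ε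

/-- `φ` is a strong boundary point: for every (basic) weak-star neighborhood `U` of
`φ` there is `f ∈ 𝒜_u(B_X)` with `‖f‖ = 1 = φ(f)` and `|ψ(f)| < 1` for `ψ ∉ U`. -/
def IsStrongBoundaryPoint {X : Type*} [NormedAddCommGroup X] [NormedSpace ℂ X]
    (φ : SpectrumAu X) : Prop :=
  ∀ (F : Finset (X → ℂ)) (hF : ∀ f ∈ F, MemAu X f) (ε : ℝ), 0 < ε →
    ∃ (g : X → ℂ) (hg : MemAu X g),
      (∀ x ∈ closedBall (0 : X) 1, ‖g x‖ ≤ 1) ∧ φ.toFun g hg = 1 ∧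
      ∀ ψ : SpectrumAu X,
        (∃ f, ∃ hf : f ∈ F, ε ≤ ‖ψ.toFun f (hF f hf) - φ.toFun f (hF f hf)‖) →
        ‖ψ.toFun g hg‖ < 1

/-- The radius function `R(φ)`. -/
def radiusFn {X : Type*} [NormedAddCommGroup X] [NormedSpace ℂ X]
    (φ : SpectrumAu X) : ℝ :=
  sInf {r : ℝ | 0 < r ∧ r ≤ 1 ∧ ∀ (f : X → ℂ) (hf : MemAu X f) (C : ℝ),
    (∀ x ∈ ball (0 : X) r, ‖f x‖ ≤ C) → ‖φ.toFun f hf‖ ≤ C}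

/-- A continuous `k`-homogeneous polynomial: `P x = A(x, …, x)` for a continuous
symmetric `k`-linear form `A`. -/
def IsHomogPoly (X : Type*) [NormedAddCommGroup X] [NormedSpace ℂ X]
    (k : ℕ) (P : X → ℂ) : Prop :=
  ∃ A : ContinuousMultilinearMap ℂ (fun _ : Fin k => X) ℂ,
    (∀ (v : Fin k → X) (σ : Equiv.Perm (Fin k)), A (v ∘ σ) = A v) ∧
    ∀ x, P x = A fun _ => x

/-- The supremum norm of a polynomial over the closed unit ball. -/
def polyNorm (X : Type*) [NormedAddCommGroup X] [NormedSpace ℂ X] (P : X → ℂ) : ℝ :=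
  sSup {r : ℝ | ∃ x : X, ‖x‖ ≤ 1 ∧ r = ‖P x‖}

/-- The truncation `z[n] = (z 0, …, z (n-1), 0, 0, …)` of an element of `ℓ_p`. -/
def lpTrunc (p : ℝ≥0∞) (z : lp (fun _ : ℕ => ℂ) p) (n : ℕ) : lp (fun _ : ℕ => ℂ) p :=
  ∑ i ∈ Finset.range n, lp.single p i (z i)

/-- The canonical unit vector `e_n` of `ℓ_p`. -/
def lpUnit (p : ℝ≥0∞) (n : ℕ) : lp (fun _ : ℕ => ℂ) p := lp.single p n 1

/-- The 4-homogeneous polynomial `Q x = Σ_{i<j} (x i * x j)^2` on `ℓ_1`. -/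
def Qpoly (x : lp (fun _ : ℕ => ℂ) 1) : ℂ :=
  ∑' q : {q : ℕ × ℕ // q.1 < q.2}, (x q.1.1 * x q.1.2) ^ 2

/-- The characteristic sequence `1_M` of a set `M ⊆ ℕ`, as an element of `ℓ_∞`. -/
def indicatorSeq (M : Set ℕ) : lp (fun _ : ℕ => ℂ) ⊤ :=
  ⟨M.indicator fun _ => (1 : ℂ), memℓp_infty (by
    refine ⟨1, ?_⟩
    rintro r ⟨i, rfl⟩
    by_cases h : i ∈ M <;> simp [h])⟩

/-- Membership in the fiber `ℳ_{z''}` over `z'' ∈ ℓ_1'' = (ℓ_∞)'`, where the dual of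
`ℓ_1` is identified with `ℓ_∞` via the pairing `(y, x) ↦ Σ_i y i * x i`. -/
def memFiberL1 (φ : SpectrumAu (lp (fun _ : ℕ => ℂ) 1))
    (z'' : lp (fun _ : ℕ => ℂ) ⊤ →L[ℂ] ℂ) : Prop :=
  ∀ (y : lp (fun _ : ℕ => ℂ) ⊤)
    (h : MemAu (lp (fun _ : ℕ => ℂ) 1) fun x => ∑' i, y i * x i),
    φ.toFun (fun x => ∑' i, y i * x i) h = z'' y


/-! By the Schwarz lemma, `‖f x - f 0‖ ≤ 2 ‖x‖` for every `f` in the unit ball of `𝒜_u(B_X)`,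
so a weak-star limit of evaluations at points of norm at most `r < 1` lies at Gleason distance
at most `2 r` from `δ_0`. Hence `‖z_α‖ → 1`, and radially projecting `z_α` onto the sphere moves
it by `1 - ‖z_α‖ → 0`, which uniform continuity turns into the same weak-star limit. -/

theorem UniformContinuousOn.tendsto_dist_comp {α β ι : Type*} [PseudoMetricSpace α]
    [PseudoMetricSpace β] {f : α → β} {s : Set α} (hf : UniformContinuousOn f s) {l : Filter ι}
    {u v : ι → α} (hu : ∀ i, u i ∈ s) (hv : ∀ i, v i ∈ s)
    (h : Tendsto (fun i => dist (u i) (v i)) l (𝓝 0)) :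
    Tendsto (fun i => dist (f (u i)) (f (v i))) l (𝓝 0) := by
  have huv : Tendsto (fun i => (u i, v i)) l (uniformity α ⊓ 𝓟 (s ×ˢ s)) :=
    tendsto_inf.2 ⟨tendsto_uniformity_iff_dist_tendsto_zero.2 h,
      tendsto_principal.2 (.of_forall fun i => ⟨hu i, hv i⟩)⟩
  exact tendsto_uniformity_iff_dist_tendsto_zero.1 (Tendsto.comp hf huv)

theorem dist_inv_norm_smul_self {E : Type*} [NormedAddCommGroup E] [NormedSpace ℝ E] {x : E}
    (hx : x ≠ 0) : dist (‖x‖⁻¹ • x) x = |1 - ‖x‖| := by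
  have hx' : ‖x‖ ≠ 0 := norm_ne_zero_iff.2 hx
  calc dist (‖x‖⁻¹ • x) x = |‖x‖⁻¹ - 1| * |‖x‖| := by
        rw [dist_eq_norm, show ‖x‖⁻¹ • x - x = (‖x‖⁻¹ - 1) • x by rw [sub_smul, one_smul],
          norm_smul, Real.norm_eq_abs, abs_norm]
    _ = |1 - ‖x‖| := by rw [← abs_mul, sub_mul, inv_mul_cancel₀ hx', one_mul]

theorem exists_norm_eq_one_tendsto_dist {E ι : Type*} [NormedAddCommGroup E] [NormedSpace ℝ E]
    {l : Filter ι} [l.NeBot] {z : ι → E} (hz : Tendsto (fun α => ‖z α‖) l (𝓝 1)) :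
    ∃ w : ι → E, (∀ α, ‖w α‖ = 1) ∧ Tendsto (fun α => dist (z α) (w α)) l (𝓝 0) := by
  classical
  have hz0 : ∀ᶠ α in l, z α ≠ 0 :=
    (hz.eventually (eventually_gt_nhds one_pos)).mono fun _ => norm_pos_iff.1
  obtain ⟨u, hu⟩ : ∃ u : E, ‖u‖ = 1 := by
    obtain ⟨α, hα⟩ := hz0.exists
    have : Nontrivial E := nontrivial_of_ne _ _ hα
    exact exists_norm_eq E zero_le_one
  refine ⟨fun α => if z α = 0 then u else ‖z α‖⁻¹ • z α, fun α => ?_, ?_⟩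
  · by_cases h : z α = 0
    · simpa [h] using hu
    · simp only [if_neg h]
      rw [norm_smul, norm_inv, norm_norm, inv_mul_cancel₀ (norm_ne_zero_iff.2 h)]
  · have hgap : Tendsto (fun α => |1 - ‖z α‖|) l (𝓝 0) := by
      simpa using ((tendsto_const_nhds (x := (1 : ℝ))).sub hz).abs
    refine hgap.congr' (hz0.mono fun α h => ?_)
    simp only [if_neg h]
    rw [dist_comm, dist_inv_norm_smul_self h]

section

variable {X : Type*} [NormedAddCommGroup X] [NormedSpace ℂ X]

theorem evalHom_toFun {x : X} (hx : ‖x‖ ≤ 1) (f : X → ℂ) (hf : MemAu X f) :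
    (evalHom x).toFun f hf = f x := by
  rw [evalHom, dif_pos hx]
  rfl

theorem wStarTendsto_evalHom_iff {ι : Type*} {l : Filter ι} {z : ι → X} (hz : ∀ α, ‖z α‖ ≤ 1)
    {φ : SpectrumAu X} :
    WStarTendsto l (fun α => evalHom (z α)) φ ↔
      ∀ f hf, Tendsto (fun α => f (z α)) l (𝓝 (φ.toFun f hf)) := by
  simp only [WStarTendsto, evalHom_toFun (hz _)]

theorem dist_apply_zero_le_two_mul_norm {f : X → ℂ} (hd : DifferentiableOn ℂ f (ball 0 1))
    (hb : ∀ x ∈ ball (0 : X) 1, ‖f x‖ ≤ 1) {x : X} (hx : ‖x‖ < 1) :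
    dist (f x) (f 0) ≤ 2 * ‖x‖ := by
  have h_maps : MapsTo f (ball 0 1) (closedBall (f 0) 2) := fun w hw => by
    rw [mem_closedBall, dist_eq_norm]
    linarith [norm_sub_le (f w) (f 0), hb w hw, hb 0 (mem_ball_self one_pos)]
  simpa using Complex.dist_le_div_mul_dist_of_mapsTo_ball hd h_maps (mem_ball_zero_iff.2 hx)

theorem gleasonDist_evalHom_zero_le {ι : Type*} {l : Filter ι} [l.NeBot] {z : ι → X}
    (hz : ∀ α, ‖z α‖ ≤ 1) {r : ℝ} (hzr : ∀ᶠ α in l, ‖z α‖ ≤ r) (hr : r < 1) {φ : SpectrumAu X}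
    (hconv : WStarTendsto l (fun α => evalHom (z α)) φ) :
    gleasonDist (evalHom 0) φ ≤ 2 * r := by
  have hr0 : 0 ≤ r := let ⟨α, hα⟩ := hzr.exists; (norm_nonneg _).trans hα
  refine Real.sSup_le ?_ (by positivity)
  rintro _ ⟨f, hf, hb, rfl⟩
  rw [evalHom_toFun (by simp), norm_sub_rev, ← dist_eq_norm]
  refine le_of_tendsto (((wStarTendsto_evalHom_iff hz).1 hconv f hf).dist tendsto_const_nhds) ?_
  filter_upwards [hzr] with α hα
  calc dist (f (z α)) (f 0) ≤ 2 * ‖z α‖ :=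
        dist_apply_zero_le_two_mul_norm hf.1 (fun x hx => hb x (ball_subset_closedBall hx))
          (hα.trans_lt hr)
    _ ≤ 2 * r := by linarith

theorem tendsto_norm_of_notMem_gleasonPart {ι : Type*} {l : Filter ι} {z : ι → X}
    (hz : ∀ α, ‖z α‖ ≤ 1) {φ : SpectrumAu X} (hconv : WStarTendsto l (fun α => evalHom (z α)) φ)
    (hφ : φ ∉ gleasonPart (evalHom 0)) : Tendsto (fun α => ‖z α‖) l (𝓝 1) := by
  refine tendsto_order.2 ⟨fun a ha => ?_, fun b hb => .of_forall fun α => (hz α).trans_lt hb⟩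
  by_contra h
  have hfreq : ∃ᶠ α in l, ‖z α‖ ≤ a := by simpa [Filter.not_eventually] using h
  have : (l ⊓ 𝓟 {α | ‖z α‖ ≤ a}).NeBot := frequently_iff_neBot.1 hfreq
  have hle := gleasonDist_evalHom_zero_le (l := l ⊓ 𝓟 {α | ‖z α‖ ≤ a}) hz
    (eventually_inf_principal.2 (.of_forall fun _ => id)) ha
    fun f hf => (hconv f hf).mono_left inf_le_left
  exact hφ (show gleasonDist _ φ < 2 by linarith)

theorem WStarTendsto.evalHom_of_tendsto_dist {ι : Type*} {l : Filter ι} {z w : ι → X}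
    (hz : ∀ α, ‖z α‖ ≤ 1) (hw : ∀ α, ‖w α‖ ≤ 1) {φ : SpectrumAu X}
    (hconv : WStarTendsto l (fun α => evalHom (z α)) φ)
    (hdist : Tendsto (fun α => dist (z α) (w α)) l (𝓝 0)) :
    WStarTendsto l (fun α => evalHom (w α)) φ := by
  rw [wStarTendsto_evalHom_iff hw]
  intro f hf
  exact ((wStarTendsto_evalHom_iff hz).1 hconv f hf).congr_dist
    (hf.2.tendsto_dist_comp (fun α => mem_closedBall_zero_iff.2 (hz α))
      (fun α => mem_closedBall_zero_iff.2 (hw α)) hdist)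

end

/-- If `φ ∈ ℳ(𝒜_u(B_X))` is the weak-star limit of a net of
evaluations at points of the closed unit ball and `φ ∉ 𝒢𝒫(δ_0)`, then `φ` is the
weak-star limit of a net of evaluations at points of the unit sphere. -/
theorem exists_sphere_net_of_not_mem_gleason_zero
    {X : Type*} [NormedAddCommGroup X] [NormedSpace ℂ X]
    {ι : Type*} (l : Filter ι) [l.NeBot]
    (z : ι → X) (hz : ∀ α, ‖z α‖ ≤ 1)
    (φ : SpectrumAu X) (hconv : WStarTendsto l (fun α => evalHom (z α)) φ)
    (hφ : φ ∉ gleasonPart (evalHom (0 : X))) :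
    ∃ z' : ι → X, (∀ α, ‖z' α‖ = 1) ∧ WStarTendsto l (fun α => evalHom (z' α)) φ := by
  obtain ⟨w, hw, hdist⟩ :=
    exists_norm_eq_one_tendsto_dist (tendsto_norm_of_notMem_gleasonPart hz hconv hφ)
  exact ⟨w, hw, hconv.evalHom_of_tendsto_dist hz (fun α => (hw α).le) hdist⟩

end
end

section
/- For each ω ∈ c₀^⊥ ⊆ (ℓ_∞)' with ‖ω‖ < 1, there exist an infinite subset M ⊆ ℕ and a net {x_β}_β of elements of ℓ_1 with ‖x_β‖₁ ≤ ‖ω‖ and supp(x_β) ⊆ ℕ \ M for every β, such that {x_β}_β converges to ω in the weak-star topology of (ℓ_∞)' (that is, y(x_β) := Σ_i y(i) x_β(i) → ω(y) for every y ∈ ℓ_∞). -/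
open Metric Filter Set Topology ENNReal

noncomputable section

/-! A functional `ω ∈ c₀^⊥` does not see finite sets. Hence for an uncountable almost disjoint
family `(A_r)` of infinite subsets of `ℕ`, the restrictions of `ω` to the `ℓ∞(A_r)` can be made
disjoint, and their norms have finite sums bounded by `‖ω‖`: all but countably many vanish, which
gives `M`. Then `ω` only sees `ℕ \ M`, and Goldstine's argument, run against finitely many
`y ∈ ℓ∞` at a time, approximates it weak-star by the `‖ω‖`-ball of `ℓ¹(ℕ \ M)`. -/

local notation "ℓ∞" => lp (fun _ : ℕ => ℂ) ⊤
local notation "ℓ¹" => lp (fun _ : ℕ => ℂ) 1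

lemma mul_conj_div_norm (z : ℂ) : z * (starRingEnd ℂ z / ‖z‖) = ‖z‖ := by
  rcases eq_or_ne z 0 with rfl | hz
  · simp
  · rw [← mul_div_assoc, Complex.mul_conj', pow_two, mul_div_assoc, div_self (by simpa using hz),
      mul_one]

lemma norm_conj_div_norm_le (z : ℂ) : ‖starRingEnd ℂ z / ‖z‖‖ ≤ 1 := by
  rw [norm_div, Complex.norm_conj, Complex.norm_real, norm_norm]
  exact div_self_le_one _

lemma indicatorSeq_mul_apply (S : Set ℕ) (y : ℓ∞) (i : ℕ) :
    (indicatorSeq S * y) i = S.indicator y i := by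
  rw [lp.infty_coeFn_mul]
  by_cases hi : i ∈ S <;> simp [indicatorSeq, hi]

lemma indicatorSeq_union {S T : Set ℕ} (h : Disjoint S T) :
    indicatorSeq (S ∪ T) = indicatorSeq S + indicatorSeq T :=
  lp.ext (indicator_union_of_disjoint h _)

lemma indicatorSeq_add_compl (S : Set ℕ) : indicatorSeq S + indicatorSeq Sᶜ = 1 := by
  rw [← indicatorSeq_union disjoint_compl_right, union_compl_self]
  exact lp.ext (indicator_univ _)

lemma norm_sum_indicatorSeq_mul_le {ι : Type*} {s : Finset ι} {B : ι → Set ℕ}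
    (hB : (s : Set ι).PairwiseDisjoint B) {w : ι → ℓ∞} {C : ℝ} (hC : 0 ≤ C)
    (hw : ∀ r ∈ s, ‖w r‖ ≤ C) : ‖∑ r ∈ s, indicatorSeq (B r) * w r‖ ≤ C := by
  refine lp.norm_le_of_forall_le hC fun i => ?_
  simp only [lp.coeFn_sum, Finset.sum_apply, indicatorSeq_mul_apply]
  by_cases hi : ∃ r ∈ s, i ∈ B r
  · obtain ⟨r, hr, hir⟩ := hi
    rw [Finset.sum_eq_single_of_mem r hr fun r' hr' hne =>
      indicator_of_notMem (hB.elim_set hr' hr i · hir |> hne) _, indicator_of_mem hir]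
    exact (lp.norm_apply_le_norm ENNReal.top_ne_zero _ i).trans (hw r hr)
  · push Not at hi
    rwa [Finset.sum_eq_zero fun r hr => indicator_of_notMem (hi r hr) _, norm_zero]

section Annihilator

def VanishesOnC₀ (ω : ℓ∞ →L[ℂ] ℂ) : Prop :=
  ∀ y : ℓ∞, Tendsto (fun i => y i) atTop (𝓝 (0 : ℂ)) → ω y = 0

variable {ω : ℓ∞ →L[ℂ] ℂ}

lemma map_indicatorSeq_mul_of_finite (hω : VanishesOnC₀ ω) {S : Set ℕ} (hS : S.Finite)
    (y : ℓ∞) : ω (indicatorSeq S * y) = 0 := by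
  refine hω _ (tendsto_const_nhds.congr' ?_)
  filter_upwards [hS.eventually_cofinite_notMem.filter_mono Nat.cofinite_eq_atTop.ge] with i hi
  rw [indicatorSeq_mul_apply, indicator_of_notMem hi]

lemma map_indicatorSeq_diff_mul (hω : VanishesOnC₀ ω) {F : Set ℕ} (hF : F.Finite) (S : Set ℕ)
    (y : ℓ∞) : ω (indicatorSeq (S \ F) * y) = ω (indicatorSeq S * y) := by
  conv_rhs => rw [← sdiff_union_inter S F, indicatorSeq_union disjoint_sdiff_inter, add_mul,
    map_add, map_indicatorSeq_mul_of_finite hω (hF.subset inter_subset_right), add_zero]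

/-- Disjointifying finitely many almost disjoint sets only changes them by finite sets, which
`ω` does not see; with suitable phases the pieces then add up to a vector of norm at most one. -/
lemma sum_norm_map_indicatorSeq_mul_le (hω : VanishesOnC₀ ω) {ι : Type*} {A : ι → Set ℕ}
    (hA : Pairwise fun r r' => (A r ∩ A r').Finite) (s : Finset ι) {y : ι → ℓ∞}
    (hy : ∀ r, ‖y r‖ ≤ 1) : ∑ r ∈ s, ‖ω (indicatorSeq (A r) * y r)‖ ≤ ‖ω‖ := by
  classical
  set F := ⋃ r ∈ s, ⋃ r' ∈ s.erase r, A r ∩ A r'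
  have hF : F.Finite := s.finite_toSet.biUnion fun r _ =>
    (s.erase r).finite_toSet.biUnion fun r' hr' => hA (Finset.ne_of_mem_erase hr').symm
  have hdisj : (s : Set ι).PairwiseDisjoint fun r => A r \ F := by
    refine fun r hr r' hr' hne => Set.disjoint_left.2 fun i hi hi' => hi'.2 ?_
    exact mem_biUnion hr (mem_biUnion (Finset.mem_erase.2 ⟨hne.symm, hr'⟩) ⟨hi.1, hi'.1⟩)
  set w := fun r => ω (indicatorSeq (A r) * y r)
  set z := ∑ r ∈ s, indicatorSeq (A r \ F) * ((starRingEnd ℂ (w r) / ‖w r‖) • y r)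
  have hz : ‖z‖ ≤ 1 := norm_sum_indicatorSeq_mul_le hdisj zero_le_one fun r _ =>
    (norm_smul_le _ _).trans (mul_le_one₀ (norm_conj_div_norm_le _) (norm_nonneg _) (hy r))
  have hωz : ω z = ((∑ r ∈ s, ‖w r‖ : ℝ) : ℂ) := by
    simp only [z, map_sum, mul_smul_comm, map_smul, map_indicatorSeq_diff_mul hω hF, smul_eq_mul]
    push_cast
    exact Finset.sum_congr rfl fun r _ => by rw [mul_comm, mul_conj_div_norm]
  calc ∑ r ∈ s, ‖w r‖ = ‖ω z‖ := by
        rw [hωz, Complex.norm_real, Real.norm_of_nonneg (by positivity)]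
    _ ≤ ‖ω‖ * ‖z‖ := ω.le_opNorm z
    _ ≤ ‖ω‖ := mul_le_of_le_one_right (norm_nonneg ω) hz

lemma countable_setOf_exists_map_indicatorSeq_mul_ne_zero (hω : VanishesOnC₀ ω) {ι : Type*}
    {A : ι → Set ℕ} (hA : Pairwise fun r r' => (A r ∩ A r').Finite) :
    {r | ∃ y, ω (indicatorSeq (A r) * y) ≠ 0}.Countable := by
  have hunit : ∀ r, ∃ y : ℓ∞, ‖y‖ ≤ 1 ∧
      ((∃ y', ω (indicatorSeq (A r) * y') ≠ 0) → ω (indicatorSeq (A r) * y) ≠ 0) := by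
    intro r
    by_cases h : ∃ y', ω (indicatorSeq (A r) * y') ≠ 0
    · obtain ⟨y', hy'⟩ := h
      have hy'0 : y' ≠ 0 := by rintro rfl; simp at hy'
      refine ⟨(‖y'‖⁻¹ : ℂ) • y', (norm_smul_inv_norm hy'0).le, fun _ => ?_⟩
      rw [mul_smul_comm, map_smul, smul_eq_mul]
      exact mul_ne_zero (by simpa using hy'0) hy'
    · exact ⟨0, by simp, fun h' => absurd h' h⟩
  choose y hy hne using hunit
  have hsum : Summable fun r => ‖ω (indicatorSeq (A r) * y r)‖ :=
    summable_of_sum_le (fun _ => norm_nonneg _) (sum_norm_map_indicatorSeq_mul_le hω hA · hy)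
  refine hsum.countable_support.mono fun r hr => ?_
  simpa using hne r hr

/-- Graphs for `r ≠ r'` can only meet where `n |r - r'| < 1`, so these sets are almost disjoint. -/
def floorGraph (r : ℝ) : Set ℕ := range fun n : ℕ => Encodable.encode (n, ⌊n * r⌋)

lemma floorGraph_infinite (r : ℝ) : (floorGraph r).Infinite :=
  infinite_range_of_injective fun _ _ h => (Prod.ext_iff.1 (Encodable.encode_injective h)).1

lemma floorGraph_inter_finite {r r' : ℝ} (h : r ≠ r') :
    (floorGraph r ∩ floorGraph r').Finite := by
  have hd : 0 < |r - r'| := abs_pos.2 (sub_ne_zero.2 h)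
  refine ((finite_Iio ⌈|r - r'|⁻¹⌉₊).image fun n : ℕ => Encodable.encode (n, ⌊n * r⌋)).subset ?_
  rintro _ ⟨⟨n, rfl⟩, ⟨n', hn'⟩⟩
  obtain ⟨rfl, hfl⟩ := Prod.mk.inj (Encodable.encode_injective hn')
  refine ⟨_, Nat.lt_ceil.2 ?_, rfl⟩
  have := Int.abs_sub_lt_one_of_floor_eq_floor hfl.symm
  rwa [← mul_sub, abs_mul, Nat.abs_cast, ← lt_div_iff₀ hd, one_div] at this

lemma pairwise_floorGraph_inter_finite :
    Pairwise fun r r' => (floorGraph r ∩ floorGraph r').Finite :=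
  fun _ _ => floorGraph_inter_finite

theorem exists_infinite_forall_map_indicatorSeq_mul_eq_zero (hω : VanishesOnC₀ ω) :
    ∃ M : Set ℕ, M.Infinite ∧ ∀ y, ω (indicatorSeq M * y) = 0 := by
  obtain ⟨r, hr⟩ : ∃ r, r ∉ {r | ∃ y, ω (indicatorSeq (floorGraph r) * y) ≠ 0} := by
    by_contra! h
    refine Cardinal.not_countable_real (Countable.mono (fun r _ => h r) ?_)
    exact countable_setOf_exists_map_indicatorSeq_mul_ne_zero hω pairwise_floorGraph_inter_finite
  exact ⟨floorGraph r, floorGraph_infinite r, by simpa using hr⟩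

end Annihilator

lemma summable_mul_lp (y : ℓ∞) (x : ℓ¹) : Summable fun i => y i * x i := by
  have hx : Summable fun i => ‖x i‖ := by
    simpa using (lp.memℓp x).summable (by simp : 0 < (1 : ℝ≥0∞).toReal)
  refine Summable.of_norm_bounded (hx.mul_left ‖y‖) fun i => ?_
  rw [norm_mul]
  exact mul_le_mul_of_nonneg_right (lp.norm_apply_le_norm ENNReal.top_ne_zero y i) (norm_nonneg _)

def pairingL (y : ℓ∞) : ℓ¹ →ₗ[ℂ] ℂ where
  toFun x := ∑' i, y i * x i
  map_add' x x' := by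
    simp only [lp.coeFn_add, Pi.add_apply, mul_add]
    exact (summable_mul_lp y x).tsum_add (summable_mul_lp y x')
  map_smul' c x := by
    simp only [lp.coeFn_smul, Pi.smul_apply, smul_eq_mul, RingHom.id_apply, ← tsum_mul_left]
    exact tsum_congr fun i => by ring

lemma pairingL_apply (y : ℓ∞) (x : ℓ¹) : pairingL y x = ∑' i, y i * x i := rfl

lemma pairingL_sum {ι : Type*} (s : Finset ι) (c : ι → ℂ) (y : ι → ℓ∞) (x : ℓ¹) :
    pairingL (∑ j ∈ s, c j • y j) x = ∑ j ∈ s, c j * pairingL (y j) x := by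
  simp only [pairingL_apply, ← tsum_mul_left]
  rw [← Summable.tsum_finsetSum fun j _ => (summable_mul_lp (y j) x).mul_left (c j)]
  refine tsum_congr fun i => ?_
  simp only [lp.coeFn_sum, Finset.sum_apply, lp.coeFn_smul, Pi.smul_apply, smul_eq_mul,
    Finset.sum_mul, mul_assoc]

lemma pairingL_single (y : ℓ∞) (i : ℕ) (a : ℂ) : pairingL y (lp.single 1 i a) = y i * a := by
  rw [pairingL_apply, tsum_eq_single i fun j hj => by
    rw [lp.single_apply_ne (E := fun _ : ℕ => ℂ) 1 i a hj, mul_zero]]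
  exact congrArg _ (lp.single_apply_self (E := fun _ : ℕ => ℂ) 1 i a)

section Density

variable {M : Set ℕ}

def closedBallVanishingOn (r : ℝ) (M : Set ℕ) : Set ℓ¹ :=
  closedBall 0 r ∩ {x | ∀ i ∈ M, x i = 0}

lemma convex_closedBallVanishingOn (r : ℝ) (M : Set ℕ) :
    Convex ℝ (closedBallVanishingOn r M) := by
  refine (convex_closedBall 0 r).inter fun x hx x' hx' a b _ _ _ i hi => ?_
  change a • x i + b • x' i = 0
  rw [hx i hi, hx' i hi, smul_zero, smul_zero, add_zero]

lemma mul_norm_indicatorSeq_compl_mul_le {r u : ℝ} (hr : 0 ≤ r) {y : ℓ∞}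
    (h : ∀ x ∈ closedBallVanishingOn r M, (pairingL y x).re < u) :
    r * ‖indicatorSeq Mᶜ * y‖ ≤ u := by
  have hu : 0 ≤ u := by simpa using (h 0 ⟨mem_closedBall_self hr, fun _ _ => rfl⟩).le
  have hsmul : ‖(r : ℂ) • (indicatorSeq Mᶜ * y)‖ ≤ u := by
    refine lp.norm_le_of_forall_le hu fun i => ?_
    rw [lp.coeFn_smul, Pi.smul_apply, indicatorSeq_mul_apply]
    by_cases hi : i ∈ M
    · simpa [hi] using hu
    set x := lp.single (E := fun _ : ℕ => ℂ) 1 i ((r : ℂ) * (starRingEnd ℂ (y i) / ‖y i‖))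
    have hx : x ∈ closedBallVanishingOn r M := by
      refine ⟨?_, fun j hj => lp.single_apply_ne 1 i _ (ne_of_mem_of_not_mem hj hi)⟩
      rw [mem_closedBall_zero_iff, lp.norm_single zero_lt_one, norm_mul, Complex.norm_real,
        Real.norm_of_nonneg hr]
      exact mul_le_of_le_one_right hr (norm_conj_div_norm_le _)
    have hxy := h x hx
    rw [pairingL_single, mul_left_comm, mul_conj_div_norm, ← Complex.ofReal_mul,
      Complex.ofReal_re] at hxy
    rw [indicator_of_mem (show i ∈ Mᶜ from hi), norm_smul, Complex.norm_real,
      Real.norm_of_nonneg hr]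
    exact hxy.le
  rwa [norm_smul, Complex.norm_real, Real.norm_of_nonneg hr] at hsmul

lemma map_indicatorSeq_compl_mul {ω : ℓ∞ →L[ℂ] ℂ} (hM : ∀ y, ω (indicatorSeq M * y) = 0)
    (y : ℓ∞) : ω (indicatorSeq Mᶜ * y) = ω y := by
  conv_rhs => rw [← one_mul y, ← indicatorSeq_add_compl M, add_mul, map_add, hM, zero_add]

/-- A finite-dimensional Goldstine argument: a functional on `ℂ^F` separating `(ω y)_{y ∈ F}`
from the image of the ball is given by some `y₀ = ∑ c_y y`, and on `y₀` the sup over the ball of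
`re ⟨y₀, x⟩` is `‖ω‖ ‖1_{Mᶜ} y₀‖ ≥ re (ω y₀)`. -/
theorem exists_mem_closedBallVanishingOn_dist_pairingL_lt {ω : ℓ∞ →L[ℂ] ℂ}
    (hM : ∀ y, ω (indicatorSeq M * y) = 0) (F : Finset ℓ∞) {ε : ℝ} (hε : 0 < ε) :
    ∃ x ∈ closedBallVanishingOn ‖ω‖ M, ∀ y ∈ F, dist (pairingL y x) (ω y) < ε := by
  classical
  set T : ℓ¹ →ₗ[ℂ] (F → ℂ) := LinearMap.pi fun y => pairingL y
  suffices (fun y : F => ω y) ∈ closure (T '' closedBallVanishingOn ‖ω‖ M) by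
    obtain ⟨_, ⟨x, hx, rfl⟩, hdist⟩ := Metric.mem_closure_iff.1 this ε hε
    refine ⟨x, hx, fun y hy => ?_⟩
    rw [dist_comm]
    exact (dist_le_pi_dist _ _ ⟨y, hy⟩).trans_lt hdist
  by_contra hnot
  obtain ⟨g, u, hg, hgu⟩ := RCLike.geometric_hahn_banach_closed_point (𝕜 := ℂ)
    ((convex_closedBallVanishingOn _ M).linear_image (T.restrictScalars ℝ)).closure
    isClosed_closure hnot
  set c : F → ℂ := fun y => g fun y' => if y = y' then 1 else 0
  set y₀ : ℓ∞ := ∑ y : F, c y • (y : ℓ∞)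
  have hg_apply (v : F → ℂ) : g v = ∑ y, c y * v y := by
    rw [← g.coe_coe, LinearMap.pi_apply_eq_sum_univ]
    exact Finset.sum_congr rfl fun y _ => by rw [smul_eq_mul, mul_comm]; rfl
  have hgT (x : ℓ¹) : g (T x) = pairingL y₀ x := by
    rw [hg_apply, pairingL_sum]
    rfl
  have hgω : g (fun y : F => ω y) = ω y₀ := by
    simp only [hg_apply, y₀, map_sum, map_smul, smul_eq_mul]
  have hnorm := mul_norm_indicatorSeq_compl_mul_le (norm_nonneg ω) fun x hx =>
    hgT x ▸ hg _ (subset_closure ⟨x, hx, rfl⟩)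
  have hbound : (ω y₀).re ≤ ‖ω‖ * ‖indicatorSeq Mᶜ * y₀‖ :=
    calc (ω y₀).re ≤ ‖ω (indicatorSeq Mᶜ * y₀)‖ := by
          rw [map_indicatorSeq_compl_mul hM]; exact Complex.re_le_norm _
      _ ≤ ‖ω‖ * ‖indicatorSeq Mᶜ * y₀‖ := ω.le_opNorm _
  rw [hgω] at hgu
  exact (hgu.trans_le (hbound.trans hnorm)).false

end Density

theorem exists_tendsto_of_forall_finset_exists_dist_lt {α β E : Type*} [PseudoMetricSpace E]
    {P : α → Prop} {f : α → β → E} {g : β → E}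
    (h : ∀ (F : Finset β) (ε : ℝ), 0 < ε → ∃ a, P a ∧ ∀ b ∈ F, dist (f a b) (g b) < ε) :
    ∃ x : Finset β × ℕ → α, (∀ n, P (x n)) ∧
      ∀ b, Tendsto (fun n => f (x n) b) atTop (𝓝 (g b)) := by
  choose x hP hdist using fun n : Finset β × ℕ =>
    h n.1 (1 / (n.2 + 1)) Nat.one_div_pos_of_nat
  refine ⟨x, hP, fun b => Metric.tendsto_nhds.2 fun ε hε => ?_⟩
  obtain ⟨N, hN⟩ := exists_nat_one_div_lt hε
  filter_upwards [eventually_ge_atTop ({b}, N)] with n hn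
  calc dist (f (x n) b) (g b) < 1 / (n.2 + 1) := hdist n b (hn.1 (Finset.mem_singleton_self b))
    _ ≤ 1 / (N + 1) := by gcongr; exact hn.2
    _ < ε := hN

theorem exists_net_supported_off_infinite_set_general
    (ω : lp (fun _ : ℕ => ℂ) ⊤ →L[ℂ] ℂ)
    (hperp : ∀ y : lp (fun _ : ℕ => ℂ) ⊤, Tendsto (fun i => y i) atTop (𝓝 (0 : ℂ)) → ω y = 0) :
    ∃ M : Set ℕ, M.Infinite ∧
      ∃ (ι : Type) (l : Filter ι), l.NeBot ∧
        ∃ x : ι → lp (fun _ : ℕ => ℂ) 1,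
          (∀ β, ‖x β‖ ≤ ‖ω‖) ∧ (∀ β, ∀ i ∈ M, x β i = 0) ∧
          ∀ y : lp (fun _ : ℕ => ℂ) ⊤,
            Tendsto (fun β => ∑' i : ℕ, y i * x β i) l (𝓝 (ω y)) := by
  classical
  obtain ⟨M, hM, hωM⟩ := exists_infinite_forall_map_indicatorSeq_mul_eq_zero hperp
  obtain ⟨x, hx, hlim⟩ := exists_tendsto_of_forall_finset_exists_dist_lt
    fun F _ hε => exists_mem_closedBallVanishingOn_dist_pairingL_lt hωM F hε
  exact ⟨M, hM, _, atTop, inferInstance, x, fun n => mem_closedBall_zero_iff.1 (hx n).1,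
    fun n => (hx n).2, hlim⟩

/-- For each `ω ∈ c₀^⊥ ⊆ (ℓ_∞)'` with `‖ω‖ < 1` there are an
infinite set `M ⊆ ℕ` and a net `{x_β} ⊆ ‖ω‖ B_{ℓ_1}` supported in `ℕ \ M` which
converges to `ω` in the weak-star topology of `(ℓ_∞)'`. -/
theorem exists_net_supported_off_infinite_set
    (ω : lp (fun _ : ℕ => ℂ) ⊤ →L[ℂ] ℂ) (hω : ‖ω‖ < 1)
    (hperp : ∀ y : lp (fun _ : ℕ => ℂ) ⊤, Tendsto (fun i => y i) atTop (𝓝 (0 : ℂ)) → ω y = 0) :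
    ∃ M : Set ℕ, M.Infinite ∧
      ∃ (ι : Type) (l : Filter ι), l.NeBot ∧
        ∃ x : ι → lp (fun _ : ℕ => ℂ) 1,
          (∀ β, ‖x β‖ ≤ ‖ω‖) ∧ (∀ β, ∀ i ∈ M, x β i = 0) ∧
          ∀ y : lp (fun _ : ℕ => ℂ) ⊤,
            Tendsto (fun β => ∑' i : ℕ, y i * x β i) l (𝓝 (ω y)) :=
  exists_net_supported_off_infinite_set_general ω hperp

end
end
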